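/- Let λ > 0 and S₀ > 0, and let F ∈ L¹(ℝ³)³ with supp F ⊂ B_{S₀} := {y ∈ ℝ³ : |y| < S₀}. Then there exists a constant C = C(λ, S₀) > 0 such that for every x ∈ ℝ³ with |x| ≥ 2S₀: |∫_{ℝ³} ∇Φ₀(x−y) ∧ F(y) dy| ≤ C ‖F‖_{L¹(ℝ³)} |x|^{−3/2} e^{−s(λx)/(4(1+S₀))}. -/

import Mathlib

open MeasureTheory Real Set

noncomputable section

/-- Three-dimensional Euclidean space. -/
abbrev E3 : Type := EuclideanSpace ℝ (Fin 3)

/-- The wake function `s(x) = |x| + x₁`. -/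
def wake (x : E3) : ℝ := ‖x‖ + x 0

/-- The `j`-th standard basis vector of `ℝ³`. -/
def e3 (j : Fin 3) : E3 := EuclideanSpace.single j 1

/-- Euclidean norm of a triple of reals. -/
def vnorm (v : Fin 3 → ℝ) : ℝ := Real.sqrt (∑ i, v i ^ 2)

/-- The steady-state vorticity fundamental solution of the Oseen system:
`Φ₀(x) = (4π|x|)⁻¹ e^{−s(λx)/2}`. -/
def Phi0 (lam : ℝ) (x : E3) : ℝ :=
  (4 * Real.pi * ‖x‖)⁻¹ * Real.exp (-(wake (lam • x)) / 2)

/-- The gradient of `Φ₀`, as a triple of reals. -/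
def gradPhi0 (lam : ℝ) (x : E3) : Fin 3 → ℝ := fun i => fderiv ℝ (Phi0 lam) x (e3 i)

/-- The vector (cross) product on `ℝ³`. -/
def cross3 (a b : Fin 3 → ℝ) : Fin 3 → ℝ :=
  ![a 1 * b 2 - a 2 * b 1, a 2 * b 0 - a 0 * b 2, a 0 * b 1 - a 1 * b 0]

/-!
For `z ≠ 0` one has `∇Φ₀(z) = -(4π)⁻¹ e^{-λs(z)/2} (z/|z|³ + λ/(2|z|) ∇s(z))` with
`∇s(z) = z/|z| + e₁` and `|∇s(z)|² = 2s(z)/|z|`. Splitting `e^{-λs/2}` into two halves, one half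
absorbs the factor `√s` (since `√t e^{-t/2} ≤ 1`), so `|∇Φ₀(z)| ≲ |z|^{-3/2} e^{-λs(z)/4}` for
`|z| ≥ S₀`. For `|x| ≥ 2S₀` and `|y| ≤ S₀` we have `|x - y| ≥ |x|/2` and
`s(x - y) ≥ s(x) - 2S₀`, so on the support of `F` the kernel is bounded by a constant times
`|x|^{-3/2} e^{-λs(x)/(4(1+S₀))}`; `|a ∧ b| ≤ |a| |b|` and integration against `|F|` finish.
-/

open Matrix

lemma vnorm_eq_norm_toLp (v : Fin 3 → ℝ) : vnorm v = ‖WithLp.toLp 2 v‖ := by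
  simp [vnorm, EuclideanSpace.norm_eq]

lemma vnorm_eq_sqrt_dotProduct (v : Fin 3 → ℝ) : vnorm v = √(v ⬝ᵥ v) := by
  simp [vnorm, dotProduct, sq]

lemma abs_le_vnorm (v : Fin 3 → ℝ) (i : Fin 3) : |v i| ≤ vnorm v := by
  simpa [vnorm_eq_norm_toLp] using PiLp.norm_apply_le (WithLp.toLp 2 v) i

lemma vnorm_le_sum_abs (v : Fin 3 → ℝ) : vnorm v ≤ ∑ i, |v i| := by
  rw [vnorm, Real.sqrt_le_left (by positivity)]
  simpa only [sq_abs] using Finset.sum_sq_le_sq_sum_of_nonneg (fun i _ => abs_nonneg (v i))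

lemma vnorm_cross3_le (a b : Fin 3 → ℝ) : vnorm (cross3 a b) ≤ vnorm a * vnorm b := by
  have hcross : cross3 a b = a ⨯₃ b := (cross_apply a b).symm
  have ha : 0 ≤ a ⬝ᵥ a := by simpa using dotProduct_self_star_nonneg a
  rw [vnorm_eq_sqrt_dotProduct, vnorm_eq_sqrt_dotProduct, vnorm_eq_sqrt_dotProduct,
    ← Real.sqrt_mul ha, hcross, cross_dot_cross, dotProduct_comm b a]
  exact Real.sqrt_le_sqrt (by nlinarith [sq_nonneg (a ⬝ᵥ b)])

lemma abs_apply_le_norm (z : E3) (i : Fin 3) : |z i| ≤ ‖z‖ := by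
  simpa using PiLp.norm_apply_le z i

lemma wake_nonneg (z : E3) : 0 ≤ wake z := by
  have := abs_le.1 (abs_apply_le_norm z 0)
  unfold wake
  linarith

lemma wake_smul {c : ℝ} (hc : 0 ≤ c) (z : E3) : wake (c • z) = c * wake z := by
  simp [wake, norm_smul, abs_of_nonneg hc]
  ring

lemma wake_le_wake_sub_add (x y : E3) : wake x ≤ wake (x - y) + 2 * ‖y‖ := by
  have hnorm : ‖x‖ ≤ ‖x - y‖ + ‖y‖ := by simpa using norm_add_le (x - y) y
  have hcoord := abs_le.1 (abs_apply_le_norm y 0)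
  simp only [wake, PiLp.sub_apply]
  linarith

def wakeGrad (z : E3) : E3 := ‖z‖⁻¹ • z + e3 0

lemma norm_wakeGrad_sq {z : E3} (hz : z ≠ 0) : ‖wakeGrad z‖ ^ 2 = 2 * wake z / ‖z‖ := by
  have hnz : ‖z‖ ≠ 0 := norm_ne_zero_iff.2 hz
  rw [wakeGrad, norm_add_sq_real, norm_smul, real_inner_smul_left]
  simp [wake, e3, EuclideanSpace.inner_single_right]
  field_simp
  ring

lemma hasFDerivAt_norm_of_ne_zero {F : Type*} [NormedAddCommGroup F] [InnerProductSpace ℝ F]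
    {z : F} (hz : z ≠ 0) : HasFDerivAt (‖·‖) (‖z‖⁻¹ • innerSL ℝ z) z := by
  have hsqrt := (hasStrictFDerivAt_norm_sq z).hasFDerivAt.sqrt (by simpa using hz)
  simp only [Real.sqrt_sq (norm_nonneg _)] at hsqrt
  refine hsqrt.congr_fderiv ?_
  ext v
  simp
  field_simp

lemma hasFDerivAt_wake {z : E3} (hz : z ≠ 0) : HasFDerivAt wake (innerSL ℝ (wakeGrad z)) z := by
  refine ((hasFDerivAt_norm_of_ne_zero hz).add (EuclideanSpace.proj (0 : Fin 3)).hasFDerivAt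
    |>.congr_fderiv ?_)
  ext v
  simp [wakeGrad, e3, EuclideanSpace.inner_single_left]

lemma Phi0_eq {lam : ℝ} (hlam : 0 ≤ lam) :
    Phi0 lam = fun y => (4 * π)⁻¹ * (‖y‖⁻¹ * exp (-(lam / 2) * wake y)) := by
  funext y
  rw [Phi0, wake_smul hlam, mul_inv, mul_assoc]
  ring_nf

lemma hasFDerivAt_Phi0 {lam : ℝ} (hlam : 0 ≤ lam) {z : E3} (hz : z ≠ 0) :
    HasFDerivAt (Phi0 lam) (innerSL ℝ (-((4 * π)⁻¹ * exp (-(lam / 2) * wake z)) •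
      ((‖z‖ ^ 3)⁻¹ • z + (lam / (2 * ‖z‖)) • wakeGrad z))) z := by
  have hnz : ‖z‖ ≠ 0 := norm_ne_zero_iff.2 hz
  have hinv := (hasDerivAt_inv hnz).comp_hasFDerivAt z (hasFDerivAt_norm_of_ne_zero hz)
  have hexp := ((hasFDerivAt_wake hz).const_mul (-(lam / 2))).exp
  rw [Phi0_eq hlam]
  refine ((hinv.mul hexp).const_mul _).congr_fderiv ?_
  ext v
  simp
  field_simp
  ring

lemma gradPhi0_eq {lam : ℝ} (hlam : 0 ≤ lam) {z : E3} (hz : z ≠ 0) :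
    WithLp.toLp 2 (gradPhi0 lam z) = -((4 * π)⁻¹ * exp (-(lam / 2) * wake z)) •
      ((‖z‖ ^ 3)⁻¹ • z + (lam / (2 * ‖z‖)) • wakeGrad z) := by
  ext i
  simp [gradPhi0, (hasFDerivAt_Phi0 hlam hz).fderiv, e3, EuclideanSpace.inner_single_right]

lemma vnorm_gradPhi0_le {lam : ℝ} (hlam : 0 ≤ lam) {z : E3} (hz : z ≠ 0) :
    vnorm (gradPhi0 lam z) ≤ (4 * π)⁻¹ * exp (-(lam / 2) * wake z) *
      ((‖z‖ ^ 2)⁻¹ + lam / (2 * ‖z‖) * ‖wakeGrad z‖) := by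
  have hr : 0 < ‖z‖ := norm_pos_iff.2 hz
  rw [vnorm_eq_norm_toLp, gradPhi0_eq hlam hz, norm_smul, norm_neg,
    Real.norm_of_nonneg (by positivity)]
  gcongr
  refine (norm_add_le _ _).trans_eq ?_
  rw [norm_smul, norm_smul, Real.norm_of_nonneg (by positivity),
    Real.norm_of_nonneg (by positivity)]
  field_simp

lemma sqrt_mul_exp_neg_half_le_one {t : ℝ} (ht : 0 ≤ t) : √t * exp (-t / 2) ≤ 1 := by
  have hdecay : t * exp (-t) ≤ 1 := by
    rw [exp_neg, ← div_eq_mul_inv, div_le_one (exp_pos t)]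
    linarith [add_one_le_exp t]
  rw [exp_half, ← Real.sqrt_mul ht]
  exact Real.sqrt_le_one.mpr hdecay

lemma exp_mul_sqrt_le_sqrt {lam w : ℝ} (hlam : 0 < lam) (hw : 0 ≤ w) :
    exp (-(lam / 4) * w) * (lam / 2 * √(2 * w)) ≤ √lam := by
  have hsqrt : lam / 2 * √(2 * w) = √lam * √(lam * w / 2) := by
    rw [← Real.sqrt_mul hlam.le, show lam * (lam * w / 2) = (lam / 2) ^ 2 * (2 * w) by ring,
      Real.sqrt_mul (sq_nonneg _), Real.sqrt_sq (by positivity)]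
  have habsorb := sqrt_mul_exp_neg_half_le_one (t := lam * w / 2) (by positivity)
  rw [show -(lam * w / 2) / 2 = -(lam / 4) * w by ring] at habsorb
  calc exp (-(lam / 4) * w) * (lam / 2 * √(2 * w))
      = √lam * (√(lam * w / 2) * exp (-(lam / 4) * w)) := by rw [hsqrt]; ring
    _ ≤ √lam := mul_le_of_le_one_right (Real.sqrt_nonneg _) habsorb

lemma rpow_neg_three_halves {r : ℝ} (hr : 0 < r) : r ^ (-(3 / 2 : ℝ)) = (r * √r)⁻¹ := by
  rw [Real.rpow_neg hr.le, show (3 / 2 : ℝ) = 1 + 1 / 2 by norm_num, Real.rpow_add hr,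
    Real.rpow_one, ← Real.sqrt_eq_rpow]

lemma vnorm_gradPhi0_le_of_le_norm {lam S : ℝ} (hlam : 0 < lam) (hS : 0 < S) {z : E3}
    (hz : S ≤ ‖z‖) :
    vnorm (gradPhi0 lam z) ≤
      (4 * π)⁻¹ * ((√S)⁻¹ + √lam) * ‖z‖ ^ (-(3 / 2 : ℝ)) * exp (-(lam / 4) * wake z) := by
  have hr : 0 < ‖z‖ := hS.trans_le hz
  have hz0 : z ≠ 0 := norm_pos_iff.1 hr
  have hw := wake_nonneg z
  set E := exp (-(lam / 4) * wake z)
  have hE1 : E ≤ 1 := exp_le_one_iff.2 (by nlinarith)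
  have hsplit : exp (-(lam / 2) * wake z) = E * E := by rw [← exp_add]; ring_nf
  have hnorm : ‖wakeGrad z‖ = √(2 * wake z) / √‖z‖ := by
    rw [← Real.sqrt_div' _ hr.le, ← norm_wakeGrad_sq hz0, Real.sqrt_sq (norm_nonneg _)]
  have hnear : E * (‖z‖ ^ 2)⁻¹ ≤ (√S)⁻¹ * (‖z‖ * √‖z‖)⁻¹ := by
    have hsq : √S * (‖z‖ * √‖z‖) ≤ ‖z‖ ^ 2 := by
      calc √S * (‖z‖ * √‖z‖) ≤ √‖z‖ * (‖z‖ * √‖z‖) := by gcongr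
        _ = ‖z‖ ^ 2 := by rw [mul_left_comm, Real.mul_self_sqrt hr.le, sq]
    calc E * (‖z‖ ^ 2)⁻¹ ≤ (‖z‖ ^ 2)⁻¹ := mul_le_of_le_one_left (by positivity) hE1
      _ ≤ (√S * (‖z‖ * √‖z‖))⁻¹ := inv_anti₀ (by positivity) hsq
      _ = (√S)⁻¹ * (‖z‖ * √‖z‖)⁻¹ := mul_inv _ _
  have hfar : E * (lam / (2 * ‖z‖) * ‖wakeGrad z‖) ≤ √lam * (‖z‖ * √‖z‖)⁻¹ := by
    calc E * (lam / (2 * ‖z‖) * ‖wakeGrad z‖)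
        = E * (lam / 2 * √(2 * wake z)) * (‖z‖ * √‖z‖)⁻¹ := by rw [hnorm]; field_simp
      _ ≤ √lam * (‖z‖ * √‖z‖)⁻¹ := by gcongr; exact exp_mul_sqrt_le_sqrt hlam hw
  calc vnorm (gradPhi0 lam z)
      ≤ (4 * π)⁻¹ * (E * E) * ((‖z‖ ^ 2)⁻¹ + lam / (2 * ‖z‖) * ‖wakeGrad z‖) :=
        hsplit ▸ vnorm_gradPhi0_le hlam.le hz0
    _ = (4 * π)⁻¹ * E * (E * (‖z‖ ^ 2)⁻¹ + E * (lam / (2 * ‖z‖) * ‖wakeGrad z‖)) := by ring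
    _ ≤ (4 * π)⁻¹ * E * ((√S)⁻¹ * (‖z‖ * √‖z‖)⁻¹ + √lam * (‖z‖ * √‖z‖)⁻¹) := by
        gcongr
    _ = _ := by rw [rpow_neg_three_halves hr]; ring

lemma rpow_neg_le_two_rpow_mul {a b p : ℝ} (ha : 0 < a) (hab : a / 2 ≤ b) (hp : 0 ≤ p) :
    b ^ (-p) ≤ 2 ^ p * a ^ (-p) :=
  calc b ^ (-p) ≤ (a / 2) ^ (-p) := Real.rpow_le_rpow_of_nonpos (by positivity) hab (by linarith)
    _ = 2 ^ p * a ^ (-p) := by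
        rw [Real.div_rpow ha.le zero_le_two, Real.rpow_neg zero_le_two, div_inv_eq_mul, mul_comm]

lemma exp_neg_wake_sub_le {lam S : ℝ} (hlam : 0 ≤ lam) (hS : 0 ≤ S) (x : E3) {y : E3}
    (hy : ‖y‖ ≤ S) :
    exp (-(lam / 4) * wake (x - y)) ≤
      exp (lam * S / 2) * exp (-(lam * wake x) / (4 * (1 + S))) := by
  have hshift : wake x - 2 * S ≤ wake (x - y) := by linarith [wake_le_wake_sub_add x y]
  have hslower : lam * wake x / (4 * (1 + S)) ≤ lam * wake x / 4 :=
    div_le_div_of_nonneg_left (mul_nonneg hlam (wake_nonneg x)) (by norm_num) (by linarith)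
  rw [← exp_add, neg_div]
  gcongr
  linarith [mul_le_mul_of_nonneg_left hshift hlam]

lemma vnorm_gradPhi0_sub_le {lam S : ℝ} (hlam : 0 < lam) (hS : 0 < S) {x y : E3}
    (hx : 2 * S ≤ ‖x‖) (hy : ‖y‖ ≤ S) :
    vnorm (gradPhi0 lam (x - y)) ≤
      (4 * π)⁻¹ * ((√S)⁻¹ + √lam) * 2 ^ (3 / 2 : ℝ) * exp (lam * S / 2) *
        ‖x‖ ^ (-(3 / 2 : ℝ)) * exp (-(lam * wake x) / (4 * (1 + S))) := by
  have hxy : ‖x‖ / 2 ≤ ‖x - y‖ := by linarith [norm_le_norm_add_norm_sub' x y, norm_sub_rev x y]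
  calc vnorm (gradPhi0 lam (x - y))
      ≤ (4 * π)⁻¹ * ((√S)⁻¹ + √lam) * ‖x - y‖ ^ (-(3 / 2 : ℝ)) *
          exp (-(lam / 4) * wake (x - y)) :=
        vnorm_gradPhi0_le_of_le_norm hlam hS (by linarith)
    _ ≤ (4 * π)⁻¹ * ((√S)⁻¹ + √lam) * (2 ^ (3 / 2 : ℝ) * ‖x‖ ^ (-(3 / 2 : ℝ))) *
          (exp (lam * S / 2) * exp (-(lam * wake x) / (4 * (1 + S)))) := by
        gcongr
        · exact rpow_neg_le_two_rpow_mul (by linarith) hxy (by norm_num)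
        · exact exp_neg_wake_sub_le hlam.le hS.le x hy
    _ = _ := by ring

lemma vnorm_integral_le {α : Type*} [MeasurableSpace α] {μ : Measure α} {g : α → Fin 3 → ℝ}
    {f : α → ℝ} (hf : Integrable f μ) {M : ℝ} (hg : ∀ a, vnorm (g a) ≤ M * f a) :
    vnorm (fun i => ∫ a, g a i ∂μ) ≤ 3 * M * ∫ a, f a ∂μ := by
  have hcoord (i : Fin 3) : |∫ a, g a i ∂μ| ≤ M * ∫ a, f a ∂μ := by
    rw [← integral_const_mul]
    exact abs_integral_le_integral_abs.trans <| integral_mono_of_nonneg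
      (ae_of_all _ fun _ => abs_nonneg _) (hf.const_mul M)
      (ae_of_all _ fun a => (abs_le_vnorm _ i).trans (hg a))
  refine (vnorm_le_sum_abs _).trans ?_
  simp only [Fin.sum_univ_three]
  linarith [hcoord 0, hcoord 1, hcoord 2]

/-- **Convolution of `∇Φ₀ ∧ ·` with a compactly supported force:** if `F ∈ L¹(ℝ³)³` with
`supp F ⊂ B_{S₀}`, then for `|x| ≥ 2S₀`,
`|∫ ∇Φ₀(x−y) ∧ F(y) dy| ≤ C ‖F‖_{L¹} |x|^{−3/2} e^{−s(λx)/(4(1+S₀))}`. -/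
theorem conv_grad_Phi0_compact_force (lam S₀ : ℝ) (hlam : 0 < lam) (hS₀ : 0 < S₀)
    (F : E3 → E3) (hF : Integrable F (volume : Measure E3))
    (hsupp : ∀ y : E3, S₀ ≤ ‖y‖ → F y = 0) :
    ∃ C > 0, ∀ x : E3, 2 * S₀ ≤ ‖x‖ →
      vnorm (fun i => ∫ y : E3, cross3 (gradPhi0 lam (x - y)) (fun l => F y l) i) ≤
        C * (∫ y : E3, ‖F y‖) * ‖x‖ ^ (-(3/2 : ℝ)) *
          Real.exp (-(wake (lam • x)) / (4 * (1 + S₀))) := by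
  set K := (4 * π)⁻¹ * ((√S₀)⁻¹ + √lam) * 2 ^ (3 / 2 : ℝ) * exp (lam * S₀ / 2)
  refine ⟨3 * K, by positivity, fun x hx => ?_⟩
  have hpointwise (y : E3) : vnorm (cross3 (gradPhi0 lam (x - y)) (fun l => F y l)) ≤
      K * ‖x‖ ^ (-(3 / 2 : ℝ)) * exp (-(lam * wake x) / (4 * (1 + S₀))) * ‖F y‖ := by
    refine (vnorm_cross3_le _ _).trans ?_
    rw [show vnorm (fun l => F y l) = ‖F y‖ from vnorm_eq_norm_toLp _]
    rcases lt_or_ge ‖y‖ S₀ with hy | hy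
    · exact mul_le_mul_of_nonneg_right (vnorm_gradPhi0_sub_le hlam hS₀ hx hy.le) (norm_nonneg _)
    · simp [hsupp y hy]
  calc _ ≤ 3 * (K * ‖x‖ ^ (-(3 / 2 : ℝ)) * exp (-(lam * wake x) / (4 * (1 + S₀)))) *
        ∫ y, ‖F y‖ := vnorm_integral_le hF.norm hpointwise
    _ = _ := by rw [wake_smul hlam.le]; ring

end
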